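/- arXiv:2604.20425 — 5 statements merged into one kernel-verified Lean document; each statement's English description precedes it below -/
import Mathlib

section
/- The set of (−1)-classes in L has exactly 16 elements, and the Weyl group W acts transitively on this set. -/
/-- The lattice L = ℤ⁶, modelling the Picard lattice of a del Pezzo surface of degree 4. -/
abbrev L6 : Type := Fin 6 → ℤ

/-- The bilinear form B((a₀,…,a₅),(b₀,…,b₅)) = a₀b₀ − a₁b₁ − ⋯ − a₅b₅. -/
def BL (v w : L6) : ℤ :=
  v 0 * w 0 - v 1 * w 1 - v 2 * w 2 - v 3 * w 3 - v 4 * w 4 - v 5 * w 5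

/-- The canonical class K = (−3,1,1,1,1,1). -/
def KL : L6 := ![-3, 1, 1, 1, 1, 1]

/-- Reflections in roots: α is a root if B(α,α) = −2 and B(α,K) = 0, and the reflection
in α is x ↦ x + B(x,α)·α. -/
def reflections : Set (L6 ≃ₗ[ℤ] L6) :=
  {f | ∃ α : L6, (BL α α = -2 ∧ BL α KL = 0) ∧ ∀ x : L6, f x = x + BL x α • α}

/-- The Weyl group W (of type D₅), generated by the reflections in all roots. -/
def W5 : Subgroup (L6 ≃ₗ[ℤ] L6) := Subgroup.closure reflections

/-- The set of (−1)-classes: v with B(v,v) = −1 and B(v,K) = −1. -/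
def minusOneClasses : Set L6 := {v | BL v v = -1 ∧ BL v KL = -1}

/-!
Write a (−1)-class as v = (a, b) with b ∈ ℤ⁵. Then ∑ bᵢ = 1 − 3a and ∑ bᵢ² = a² + 1, so Cauchy–Schwarz
forces 0 ≤ a ≤ 2; for a = 0 the sum ∑ (bᵢ² − bᵢ) = a(a + 3) vanishes, for a ∈ {1, 2} the sum
∑ (bᵢ² + bᵢ) = (a − 1)(a − 2) does, and either way every bᵢ ∈ {−1, 0, 1}. A finite search then
leaves the sixteen classes eᵢ, h − eᵢ − eⱼ and 2h − ∑ eᵢ.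

If two (−1)-classes v, w are orthogonal, v − w is a root whose reflection sends v to w. Each class
is orthogonal to ten of the other fifteen, so (as 10 + 10 > 14) any two classes v, w have a
common orthogonal class u, and v ↦ u ↦ w is a product of two reflections.
-/

open Finset

lemma BL_self_eq (v : L6) : BL v v = v 0 ^ 2 - ∑ i : Fin 5, v i.succ ^ 2 := by
  simp [BL, Fin.sum_univ_five]; ring

lemma BL_KL_eq (v : L6) : BL v KL = -3 * v 0 - ∑ i : Fin 5, v i.succ := by
  simp [BL, KL, Fin.sum_univ_five]; ring

lemma Int.eq_zero_or_eq_one_of_sum_sq_sub_self_eq_zero {ι : Type*} {s : Finset ι} {b : ι → ℤ}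
    (h : ∑ i ∈ s, (b i ^ 2 - b i) = 0) {i : ι} (hi : i ∈ s) : b i = 0 ∨ b i = 1 := by
  have hb : b i ^ 2 - b i = 0 :=
    (sum_eq_zero_iff_of_nonneg fun j _ => sub_nonneg.2 (Int.le_self_sq (b j))).1 h i hi
  have : b i * (b i - 1) = 0 := by linear_combination hb
  exact (mul_eq_zero.1 this).imp id sub_eq_zero.1

lemma head_mem_Icc_of_mem_minusOneClasses {v : L6} (hv : v ∈ minusOneClasses) :
    v 0 ∈ Icc 0 2 := by
  obtain ⟨hvv, hvK⟩ := hv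
  rw [BL_self_eq] at hvv
  rw [BL_KL_eq] at hvK
  have hcs := sq_sum_le_card_mul_sum_sq (s := univ) (f := fun i : Fin 5 => v i.succ)
  simp only [card_univ, Fintype.card_fin, Nat.cast_ofNat] at hcs
  have : (2 * v 0 + 1) * (v 0 - 2) ≤ 0 := by nlinarith
  rw [mem_Icc]
  rcases mul_nonpos_iff.1 this with h | h <;> omega

lemma succ_mem_Icc_of_mem_minusOneClasses {v : L6} (hv : v ∈ minusOneClasses) (i : Fin 5) :
    v i.succ ∈ Icc (-1) 1 := by
  have ha := mem_Icc.1 (head_mem_Icc_of_mem_minusOneClasses hv)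
  obtain ⟨hvv, hvK⟩ := hv
  rw [BL_self_eq] at hvv
  rw [BL_KL_eq] at hvK
  rw [mem_Icc]
  obtain ha0 | ha0 : v 0 = 0 ∨ 1 ≤ v 0 := by omega
  · have h : ∑ j : Fin 5, (v j.succ ^ 2 - v j.succ) = 0 := by
      rw [ha0] at hvv hvK; rw [sum_sub_distrib]; linarith
    rcases Int.eq_zero_or_eq_one_of_sum_sq_sub_self_eq_zero h (mem_univ i) with h | h <;> omega
  · have h : ∑ j : Fin 5, ((-v j.succ) ^ 2 - -v j.succ) = 0 := by
      simp only [neg_sq, sub_neg_eq_add, sum_add_distrib]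
      nlinarith
    rcases Int.eq_zero_or_eq_one_of_sum_sq_sub_self_eq_zero h (mem_univ i) with h | h <;> omega

lemma mem_piFinset_of_mem_minusOneClasses {v : L6} (hv : v ∈ minusOneClasses) :
    v ∈ Fintype.piFinset (Fin.cons (Icc 0 2) fun _ => Icc (-1) 1) := by
  rw [Fintype.mem_piFinset]
  refine Fin.cases ?_ fun i => ?_
  · exact head_mem_Icc_of_mem_minusOneClasses hv
  · exact succ_mem_Icc_of_mem_minusOneClasses hv i

def minusOneList : List L6 :=
  [![0,1,0,0,0,0], ![0,0,1,0,0,0], ![0,0,0,1,0,0], ![0,0,0,0,1,0], ![0,0,0,0,0,1],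
   ![1,-1,-1,0,0,0], ![1,-1,0,-1,0,0], ![1,-1,0,0,-1,0], ![1,-1,0,0,0,-1],
   ![1,0,-1,-1,0,0], ![1,0,-1,0,-1,0], ![1,0,-1,0,0,-1],
   ![1,0,0,-1,-1,0], ![1,0,0,-1,0,-1], ![1,0,0,0,-1,-1],
   ![2,-1,-1,-1,-1,-1]]

lemma mem_minusOneList_of_mem_piFinset :
    ∀ v ∈ Fintype.piFinset (Fin.cons (Icc 0 2) fun _ => Icc (-1) 1),
      BL v v = -1 → BL v KL = -1 → v ∈ minusOneList := by
  decide +kernel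

lemma mem_minusOneClasses_iff {v : L6} : v ∈ minusOneClasses ↔ v ∈ minusOneList :=
  ⟨fun hv => mem_minusOneList_of_mem_piFinset v (mem_piFinset_of_mem_minusOneClasses hv) hv.1 hv.2,
    fun hv => (by decide : ∀ v ∈ minusOneList, BL v v = -1 ∧ BL v KL = -1) v hv⟩

lemma ncard_minusOneClasses : minusOneClasses.ncard = 16 := by
  have : minusOneClasses = minusOneList.toFinset := by
    ext v
    rw [mem_coe, List.mem_toFinset, mem_minusOneClasses_iff]
  rw [this, Set.ncard_coe_finset]
  decide

def negBLDual (α : L6) : Module.Dual ℤ L6 where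
  toFun x := -BL x α
  map_add' x y := by simp only [BL, Pi.add_apply]; ring
  map_smul' c x := by simp only [BL, Pi.smul_apply, smul_eq_mul, RingHom.id_apply]; ring

def rootReflection (α : L6) (hα : BL α α = -2) : L6 ≃ₗ[ℤ] L6 :=
  Module.reflection (f := negBLDual α) (x := α) (by simp [negBLDual, hα])

lemma rootReflection_apply (α : L6) (hα : BL α α = -2) (x : L6) :
    rootReflection α hα x = x + BL x α • α := by
  simp [rootReflection, Module.reflection_apply, negBLDual]

lemma rootReflection_mem_W5 (α : L6) (hα : BL α α = -2) (hK : BL α KL = 0) :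
    rootReflection α hα ∈ W5 :=
  Subgroup.subset_closure ⟨α, ⟨hα, hK⟩, rootReflection_apply α hα⟩

lemma exists_mem_W5_apply_eq_of_BL_eq_zero {v w : L6} (hv : v ∈ minusOneClasses)
    (hw : w ∈ minusOneClasses) (h : BL v w = 0) : ∃ g ∈ W5, g v = w := by
  obtain ⟨hvv, hvK⟩ := hv
  obtain ⟨hww, hwK⟩ := hw
  have hα : BL (v - w) (v - w) = -2 := by
    simp only [BL, Pi.sub_apply] at *; linear_combination hvv + hww - 2 * h
  have hK : BL (v - w) KL = 0 := by
    simp only [BL, Pi.sub_apply] at *; linear_combination hvK - hwK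
  have hv : BL v (v - w) = -1 := by
    simp only [BL, Pi.sub_apply] at *; linear_combination hvv - h
  refine ⟨rootReflection (v - w) hα, rootReflection_mem_W5 _ hα hK, ?_⟩
  rw [rootReflection_apply, hv]
  module

lemma exists_orthogonal_mem_minusOneList :
    ∀ v ∈ minusOneList, ∀ w ∈ minusOneList, ∃ u ∈ minusOneList, BL v u = 0 ∧ BL u w = 0 := by
  decide

lemma exists_mem_W5_apply_eq {v w : L6} (hv : v ∈ minusOneClasses) (hw : w ∈ minusOneClasses) :
    ∃ g ∈ W5, g v = w := by
  obtain ⟨u, hu, hvu, huw⟩ := exists_orthogonal_mem_minusOneList v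
    (mem_minusOneClasses_iff.1 hv) w (mem_minusOneClasses_iff.1 hw)
  have hu : u ∈ minusOneClasses := mem_minusOneClasses_iff.2 hu
  obtain ⟨g, hg, rfl⟩ := exists_mem_W5_apply_eq_of_BL_eq_zero hv hu hvu
  obtain ⟨g', hg', rfl⟩ := exists_mem_W5_apply_eq_of_BL_eq_zero hu hw huw
  exact ⟨g' * g, mul_mem hg' hg, rfl⟩

theorem minusOne_classes_card_and_transitive :
    minusOneClasses.ncard = 16 ∧
    ∀ v ∈ minusOneClasses, ∀ w ∈ minusOneClasses, ∃ g ∈ W5, g v = w :=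
  ⟨ncard_minusOneClasses, fun _ hv _ hw => exists_mem_W5_apply_eq hv hw⟩
end

section
/- Let T be a nontrivial finite subgroup of ℂˣ × ℂˣ that is stable under both automorphisms s : (a,b) ↦ (b,a) and ι₁ : (a,b) ↦ (a⁻¹,b), and let n be the exponent of T. Then either T = {(a,b) ∈ ℂˣ×ℂˣ : aⁿ = 1 and bⁿ = 1} (isomorphic to Cₙ × Cₙ), or n is even and T = {(a,b) ∈ ℂˣ×ℂˣ : aⁿ = 1, bⁿ = 1 and (a·b⁻¹)^{n/2} = 1}, which equals the subgroup generated by (ζₙ,ζₙ) and (ζₙ²,1) for any primitive n-th root of unity ζₙ and is isomorphic to Cₙ × C_{n/2}. -/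
/-!
The first projection of `T` is a finite, hence cyclic, subgroup of `ℂˣ`, and by the swap symmetry
its exponent is that of `T`; so it is all of `μₙ`. Composing the symmetries gives
`(a, b) (a, b⁻¹) = (a², 1) ∈ T`, so `K = {a | (a, 1) ∈ T}` lies between the squares of `μₙ` and
`μₙ`: either `K = μₙ` and `T = μₙ × μₙ`, or `n = 2k` and `K = μₖ`. In the second case
`(a, 1) ∈ T ↔ (b, 1) ∈ T` for `(a, b) ∈ T`, so `aᵏ = bᵏ ∈ {±1}`, and the shear
`(a, b) ↦ (b, a b⁻¹)` carries `T` onto `μₙ × μₖ`, which gives both the generators and the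
isomorphism type.
-/

open Subgroup

section CommGroup

variable {G : Type*} [CommGroup G]

variable (G) in
@[simps]
def shearEquiv : G × G ≃* G × G where
  toFun p := (p.2, p.1 * p.2⁻¹)
  invFun q := (q.2 * q.1, q.1)
  left_inv p := by simp
  right_inv q := by simp
  map_mul' p q := by ext <;> simp [mul_mul_mul_comm, mul_comm]

theorem comap_shearEquiv_prod_zpowers (x y : G) :
    ((zpowers x).prod (zpowers y)).comap (shearEquiv G) = closure {(x, x), (y, 1)} := by
  ext ⟨a, b⟩
  simp only [mem_comap, MonoidHom.coe_coe, shearEquiv_apply, mem_prod, mem_zpowers_iff,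
    mem_closure_pair, Prod.ext_iff, Prod.fst_mul, Prod.snd_mul, Prod.pow_fst, Prod.pow_snd,
    one_zpow, mul_one]
  constructor
  · rintro ⟨⟨i, hi⟩, j, hj⟩
    exact ⟨i, j, by rw [mul_comm, hj, hi, inv_mul_cancel_right], hi⟩
  · rintro ⟨i, j, hab, hi⟩
    exact ⟨⟨i, hi⟩, j, by rw [← hab, ← hi, mul_inv_cancel_comm]⟩

end CommGroup

namespace Subgroup

section SwapStable

variable {G : Type*} [Group G] {T : Subgroup (G × G)}

theorem exponent_map_fst_eq_of_swap_mem (hswap : ∀ p : G × G, p ∈ T → (p.2, p.1) ∈ T) :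
    Monoid.exponent (T.map (MonoidHom.fst G G)) = Monoid.exponent T := by
  apply Nat.dvd_antisymm
  · refine Monoid.exponent_dvd_of_forall_pow_eq_one fun ⟨a, p, hp, hpa⟩ ↦ Subtype.ext ?_
    subst hpa
    simpa using congrArg (fun q : T ↦ (q : G × G).1) (Monoid.pow_exponent_eq_one ⟨p, hp⟩)
  · refine Monoid.exponent_dvd_of_forall_pow_eq_one fun ⟨p, hp⟩ ↦ Subtype.ext ?_
    have pow_eq_one : ∀ q ∈ T, (q : G × G).1 ^ Monoid.exponent (T.map (MonoidHom.fst G G)) = 1 :=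
      fun q hq ↦ by
        simpa using congrArg Subtype.val (Monoid.pow_exponent_eq_one (⟨q.1, q, hq, rfl⟩ :
          T.map (MonoidHom.fst G G)))
    exact Prod.ext (pow_eq_one p hp) (pow_eq_one _ (hswap p hp))

theorem mk_one_mem_iff_of_mem (hswap : ∀ p : G × G, p ∈ T → (p.2, p.1) ∈ T) {p : G × G}
    (hp : p ∈ T) : (p.1, 1) ∈ T ↔ (p.2, 1) ∈ T := by
  have hdecomp : ((p.1, 1) : G × G) = p * (1, p.2)⁻¹ := by ext <;> simp
  rw [hdecomp, mul_mem_cancel_left hp, inv_mem_iff]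
  exact ⟨hswap _, hswap _⟩

theorem mk_mem_of_mk_mem_of_mk_one_mem (hswap : ∀ p : G × G, p ∈ T → (p.2, p.1) ∈ T)
    {a b c : G} (hac : (a, c) ∈ T) (hcb : (c⁻¹ * b, 1) ∈ T) : (a, b) ∈ T := by
  simpa using mul_mem hac (hswap _ hcb)

theorem mk_sq_one_mem_of_mem (hswap : ∀ p : G × G, p ∈ T → (p.2, p.1) ∈ T)
    (hinv : ∀ p : G × G, p ∈ T → (p.1⁻¹, p.2) ∈ T) {p : G × G} (hp : p ∈ T) :
    (p.1 ^ 2, 1) ∈ T := by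
  have hprod : p * (p.1, p.2⁻¹) = (p.1 ^ 2, 1) := Prod.ext (sq p.1).symm (mul_inv_cancel p.2)
  exact hprod ▸ mul_mem hp (hswap _ (hinv _ (hswap p hp)))

theorem eq_prod_of_le_comap_inl (hswap : ∀ p : G × G, p ∈ T → (p.2, p.1) ∈ T)
    {H : Subgroup G} (hle : T ≤ H.prod H) (hH : H ≤ T.comap (MonoidHom.inl G G)) :
    T = H.prod H :=
  le_antisymm hle fun p ⟨h1, h2⟩ ↦ by
    have h1' : (p.1, 1) ∈ T := hH h1
    have h2' : (p.2, 1) ∈ T := hH h2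
    simpa using mul_mem h1' (hswap _ h2')

end SwapStable

theorem exists_isPrimitiveRoot_exponent_mk_mem {G : Type*} [CommGroup G] {T : Subgroup (G × G)}
    [Finite T] (hswap : ∀ p : G × G, p ∈ T → (p.2, p.1) ∈ T) :
    ∃ ζ η : G, IsPrimitiveRoot ζ (Monoid.exponent T) ∧ (ζ, η) ∈ T := by
  have : Finite (T.map (MonoidHom.fst G G)) :=
    Finite.of_surjective _ (MonoidHom.subgroupMap_surjective _ T)
  obtain ⟨g, hord⟩ := Monoid.exists_orderOf_eq_exponent
    (Monoid.ExponentExists.of_finite (G := T.map (MonoidHom.fst G G)))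
  obtain ⟨p, hp, hpg⟩ := g.2
  refine ⟨p.1, p.2, ?_, hp⟩
  rw [← exponent_map_fst_eq_of_swap_mem hswap, ← hord, ← Subgroup.orderOf_coe g, ← hpg]
  exact IsPrimitiveRoot.orderOf _

end Subgroup

section RootsOfUnity

variable {M : Type*} [CommMonoid M]

theorem sq_pow_eq_one_of_mem_rootsOfUnity {k : ℕ} {u : Mˣ} (hu : u ∈ rootsOfUnity (2 * k) M) :
    (u ^ k) ^ 2 = 1 := by
  rw [← pow_mul, mul_comm]
  exact hu

theorem Subgroup.le_prod_rootsOfUnity_exponent (T : Subgroup (Mˣ × Mˣ)) :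
    T ≤ (rootsOfUnity (Monoid.exponent T) M).prod (rootsOfUnity (Monoid.exponent T) M) :=
  fun p hp ↦ by
    simpa [Prod.ext_iff, mem_prod, mem_rootsOfUnity] using
      congrArg Subtype.val (Monoid.pow_exponent_eq_one (⟨p, hp⟩ : T))

theorem mem_comap_shearEquiv_prod_rootsOfUnity {n k : ℕ} (hk : k ∣ n) {p : Mˣ × Mˣ} :
    p ∈ ((rootsOfUnity n M).prod (rootsOfUnity k M)).comap (shearEquiv Mˣ) ↔
      p.1 ^ n = 1 ∧ p.2 ^ n = 1 ∧ (p.1 * p.2⁻¹) ^ k = 1 := by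
  simp only [mem_comap, MonoidHom.coe_coe, shearEquiv_apply, mem_prod, mem_rootsOfUnity]
  refine ⟨fun ⟨h2, h12⟩ ↦ ⟨?_, h2, h12⟩, fun ⟨_, h2, h12⟩ ↦ ⟨h2, h12⟩⟩
  obtain ⟨d, rfl⟩ := hk
  rw [← inv_mul_cancel_right p.1 p.2, mul_pow, pow_mul, h12, one_pow, one_mul, h2]

end RootsOfUnity

namespace IsPrimitiveRoot

variable {R : Type*} [CommRing R] {x y : Rˣ} {n m : ℕ}

noncomputable def zpowersProdEquiv (hx : IsPrimitiveRoot x n) (hy : IsPrimitiveRoot y m) :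
    (zpowers x).prod (zpowers y) ≃* Multiplicative (ZMod n × ZMod m) :=
  (prodEquiv _ _).trans <|
    ((AddEquiv.toMultiplicativeLeft hx.zmodEquivZPowers).prodCongr
      (AddEquiv.toMultiplicativeLeft hy.zmodEquivZPowers)).symm.trans
      (MulEquiv.prodMultiplicative _ _).symm

noncomputable def closurePairEquiv (hx : IsPrimitiveRoot x n) (hy : IsPrimitiveRoot y m) :
    closure {(x, x), (y, 1)} ≃* Multiplicative (ZMod n × ZMod m) :=
  (MulEquiv.subgroupCongr (comap_shearEquiv_prod_zpowers x y).symm).trans <|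
    ((shearEquiv Rˣ).subgroupMap _).trans <|
      (MulEquiv.subgroupCongr
        (map_comap_eq_self_of_surjective (shearEquiv Rˣ).surjective _)).trans
        (hx.zpowersProdEquiv hy)

end IsPrimitiveRoot

section IsDomain

variable {R : Type*} [CommRing R] [IsDomain R]

theorem Units.eq_of_sq_eq_one_of_eq_one_iff {x y : Rˣ} (hx : x ^ 2 = 1) (hy : y ^ 2 = 1)
    (h : x = 1 ↔ y = 1) : x = y := by
  have eq_neg_one : ∀ u : Rˣ, u ^ 2 = 1 → u ≠ 1 → u = -1 := fun u hu hu1 ↦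
    Units.ext <| (sq_eq_one_iff.mp (by simpa using congrArg Units.val hu)).resolve_left
      fun h ↦ hu1 (Units.ext h)
  by_cases hx1 : x = 1
  · rw [hx1, h.mp hx1]
  · rw [eq_neg_one x hx hx1, eq_neg_one y hy (h.not.mp hx1)]

theorem Subgroup.eq_rootsOfUnity_or_of_sq_mem {K : Subgroup Rˣ} {ζ : Rˣ} {n : ℕ} [NeZero n]
    (hζ : IsPrimitiveRoot ζ n) (hle : K ≤ rootsOfUnity n R) (hsq : ζ ^ 2 ∈ K) :
    K = rootsOfUnity n R ∨ ∃ k, n = 2 * k ∧ K = rootsOfUnity k R := by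
  by_cases hζK : ζ ∈ K
  · exact .inl <| le_antisymm hle (hζ.zpowers_eq ▸ zpowers_le.mpr hζK)
  right
  obtain ⟨k, rfl⟩ : 2 ∣ n := by
    rw [← even_iff_two_dvd]
    by_contra hodd
    obtain ⟨m, hm⟩ := Nat.not_even_iff_odd.mp hodd
    refine hζK ?_
    have : ζ = (ζ ^ 2) ^ (m + 1) := by
      rw [← pow_mul, show 2 * (m + 1) = n + 1 by omega, pow_succ, hζ.pow_eq_one, one_mul]
    exact this ▸ pow_mem hsq _
  have hk0 : k ≠ 0 := right_ne_zero_of_mul (NeZero.ne (2 * k))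
  have : NeZero k := ⟨hk0⟩
  have hge : rootsOfUnity k R ≤ K :=
    (hζ.pow (Nat.pos_of_neZero _) rfl).zpowers_eq ▸ zpowers_le.mpr hsq
  refine ⟨k, rfl, le_antisymm (fun x hxK ↦ ?_) hge⟩
  by_contra hxk
  have hζk : ζ ^ k ≠ 1 := hζ.pow_ne_one_of_pos_of_lt hk0 (by omega)
  -- `x ^ k` and `ζ ^ k` are both `-1`, so `ζ * x⁻¹ ∈ μₖ ≤ K`.
  have hxζ : x ^ k = ζ ^ k := Units.eq_of_sq_eq_one_of_eq_one_iff
    (sq_pow_eq_one_of_mem_rootsOfUnity (hle hxK))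
    (sq_pow_eq_one_of_mem_rootsOfUnity hζ.pow_eq_one) (iff_of_false hxk hζk)
  refine hζK ?_
  have hquot : ζ * x⁻¹ ∈ K := hge (by simp [mem_rootsOfUnity, mul_pow, hxζ])
  simpa using mul_mem hquot hxK

theorem IsPrimitiveRoot.comap_shearEquiv_prod_rootsOfUnity_eq_closure {ξ : Rˣ} {k : ℕ}
    [NeZero k] (hξ : IsPrimitiveRoot ξ (2 * k)) :
    ((rootsOfUnity (2 * k) R).prod (rootsOfUnity k R)).comap (shearEquiv Rˣ) =
      closure {(ξ, ξ), (ξ ^ 2, 1)} := by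
  rw [← hξ.zpowers_eq, ← (hξ.pow (Nat.pos_of_neZero _) rfl).zpowers_eq,
    comap_shearEquiv_prod_zpowers]

theorem Subgroup.eq_comap_shearEquiv_of_comap_inl_eq {T : Subgroup (Rˣ × Rˣ)} {k : ℕ}
    [NeZero (2 * k)] {ζ η : Rˣ} (hswap : ∀ p : Rˣ × Rˣ, p ∈ T → (p.2, p.1) ∈ T)
    (hle : T ≤ (rootsOfUnity (2 * k) R).prod (rootsOfUnity (2 * k) R))
    (hζ : IsPrimitiveRoot ζ (2 * k)) (hζη : (ζ, η) ∈ T)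
    (hK : T.comap (MonoidHom.inl Rˣ Rˣ) = rootsOfUnity k R) :
    T = ((rootsOfUnity (2 * k) R).prod (rootsOfUnity k R)).comap (shearEquiv Rˣ) := by
  have hfst : ∀ a ∈ rootsOfUnity (2 * k) R, ∃ c, (a, c) ∈ T := by
    rw [← hζ.zpowers_eq]
    rintro _ ⟨i, rfl⟩
    exact ⟨η ^ i, by simpa using zpow_mem hζη i⟩
  have mem_iff : ∀ a : Rˣ, (a, 1) ∈ T ↔ a ^ k = 1 := fun a ↦ by
    rw [← mem_rootsOfUnity, ← hK]
    rfl
  have pow_eq : ∀ p ∈ T, p.1 ^ k = p.2 ^ k := fun p hp ↦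
    Units.eq_of_sq_eq_one_of_eq_one_iff (sq_pow_eq_one_of_mem_rootsOfUnity (hle hp).1)
      (sq_pow_eq_one_of_mem_rootsOfUnity (hle hp).2)
      (by rw [← mem_iff, ← mem_iff]; exact mk_one_mem_iff_of_mem hswap hp)
  ext ⟨a, b⟩
  rw [mem_comap_shearEquiv_prod_rootsOfUnity (dvd_mul_left k 2)]
  refine ⟨fun hp ↦ ⟨(hle hp).1, (hle hp).2, ?_⟩, fun ⟨ha, _, hab⟩ ↦ ?_⟩
  · rw [mul_pow, inv_pow, pow_eq _ hp, mul_inv_cancel]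
  · obtain ⟨c, hac⟩ := hfst a ha
    refine mk_mem_of_mk_mem_of_mk_one_mem hswap hac ((mem_iff _).mpr ?_)
    rw [mul_pow, inv_pow, mul_inv_eq_one] at hab
    rw [mul_pow, inv_pow, inv_mul_eq_one, ← pow_eq _ hac, hab]

end IsDomain

theorem torus_invariant_subgroup_classification_general
    (T : Subgroup (ℂˣ × ℂˣ)) (hfin : Finite T)
    (hswap : ∀ p : ℂˣ × ℂˣ, p ∈ T → (p.2, p.1) ∈ T)
    (hinv : ∀ p : ℂˣ × ℂˣ, p ∈ T → (p.1⁻¹, p.2) ∈ T)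
    (n : ℕ) (hn : n = Monoid.exponent T) :
    ((T : Set (ℂˣ × ℂˣ)) = {p : ℂˣ × ℂˣ | p.1 ^ n = 1 ∧ p.2 ^ n = 1} ∧
      Nonempty (T ≃* Multiplicative (ZMod n × ZMod n))) ∨
    (Even n ∧
      (T : Set (ℂˣ × ℂˣ)) =
        {p : ℂˣ × ℂˣ | p.1 ^ n = 1 ∧ p.2 ^ n = 1 ∧ (p.1 * p.2⁻¹) ^ (n / 2) = 1} ∧
      (∀ ζ : ℂˣ, IsPrimitiveRoot ζ n →
        T = Subgroup.closure {((ζ, ζ) : ℂˣ × ℂˣ), ((ζ ^ 2, 1) : ℂˣ × ℂˣ)}) ∧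
      Nonempty (T ≃* Multiplicative (ZMod n × ZMod (n / 2)))) := by
  obtain ⟨ζ, η, hζ, hζη⟩ := exists_isPrimitiveRoot_exponent_mk_mem hswap
  rw [← hn] at hζ
  have : NeZero n := ⟨hn ▸ Monoid.exponent_ne_zero_of_finite⟩
  have hle : T ≤ (rootsOfUnity n ℂ).prod (rootsOfUnity n ℂ) :=
    hn ▸ le_prod_rootsOfUnity_exponent T
  rcases eq_rootsOfUnity_or_of_sq_mem (K := T.comap (MonoidHom.inl ℂˣ ℂˣ)) hζ
    (fun a ha ↦ (hle ha).1) (mk_sq_one_mem_of_mem hswap hinv hζη) with hK | ⟨k, rfl, hK⟩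
  · have hT := eq_prod_of_le_comap_inl hswap hle hK.ge
    refine .inl ⟨by rw [hT]; rfl, ⟨(MulEquiv.subgroupCongr hT).trans ?_⟩⟩
    rw [← hζ.zpowers_eq]
    exact hζ.zpowersProdEquiv hζ
  · have : NeZero k := ⟨right_ne_zero_of_mul (NeZero.ne (2 * k))⟩
    have hT := eq_comap_shearEquiv_of_comap_inl_eq hswap hle hζ hζη hK
    have hclosure : ∀ ξ : ℂˣ, IsPrimitiveRoot ξ (2 * k) →
        T = Subgroup.closure {(ξ, ξ), (ξ ^ 2, 1)} :=
      fun ξ hξ ↦ hT.trans hξ.comap_shearEquiv_prod_rootsOfUnity_eq_closure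
    rw [Nat.mul_div_cancel_left k two_pos]
    refine .inr ⟨even_two_mul k, ?_, hclosure, ⟨(MulEquiv.subgroupCongr (hclosure ζ hζ)).trans
      (hζ.closurePairEquiv (hζ.pow (Nat.pos_of_neZero _) rfl))⟩⟩
    ext p
    rw [SetLike.mem_coe, hT, mem_comap_shearEquiv_prod_rootsOfUnity (dvd_mul_left k 2)]
    rfl

theorem torus_invariant_subgroup_classification
    (T : Subgroup (ℂˣ × ℂˣ)) (hfin : Finite T) (hnt : T ≠ ⊥)
    (hswap : ∀ p : ℂˣ × ℂˣ, p ∈ T → (p.2, p.1) ∈ T)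
    (hinv : ∀ p : ℂˣ × ℂˣ, p ∈ T → (p.1⁻¹, p.2) ∈ T)
    (n : ℕ) (hn : n = Monoid.exponent T) :
    ((T : Set (ℂˣ × ℂˣ)) = {p : ℂˣ × ℂˣ | p.1 ^ n = 1 ∧ p.2 ^ n = 1} ∧
      Nonempty (T ≃* Multiplicative (ZMod n × ZMod n))) ∨
    (Even n ∧
      (T : Set (ℂˣ × ℂˣ)) =
        {p : ℂˣ × ℂˣ | p.1 ^ n = 1 ∧ p.2 ^ n = 1 ∧ (p.1 * p.2⁻¹) ^ (n / 2) = 1} ∧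
      (∀ ζ : ℂˣ, IsPrimitiveRoot ζ n →
        T = Subgroup.closure {((ζ, ζ) : ℂˣ × ℂˣ), ((ζ ^ 2, 1) : ℂˣ × ℂˣ)}) ∧
      Nonempty (T ≃* Multiplicative (ZMod n × ZMod (n / 2)))) :=
  torus_invariant_subgroup_classification_general T hfin hswap hinv n hn
end

section
/- The following identities hold in ℂ[x₁,x₂,y₁,y₂]. For every ζ ∈ ℂ with ζⁿ = 1: r₁(ζx₁,x₂,ζy₁,y₂) = ζ·r₁(x₁,x₂,y₁,y₂), r₂(ζx₁,x₂,ζy₁,y₂) = r₂(x₁,x₂,y₁,y₂), t₁(ζx₁,x₂,ζy₁,y₂) = ζ·t₁(x₁,x₂,y₁,y₂), and t₂(ζx₁,x₂,ζy₁,y₂) = t₂(x₁,x₂,y₁,y₂). Moreover r₁(x₂,x₁,y₂,y₁) = −t₂(x₁,x₂,y₁,y₂), r₂(x₂,x₁,y₂,y₁) = −t₁(x₁,x₂,y₁,y₂), t₁(x₂,x₁,y₂,y₁) = −r₂(x₁,x₂,y₁,y₂), t₂(x₂,x₁,y₂,y₁) = −r₁(x₁,x₂,y₁,y₂); and r₁(y₁,y₂,x₁,x₂)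 = t₁(x₁,x₂,y₁,y₂), r₂(y₁,y₂,x₁,x₂) = t₂(x₁,x₂,y₁,y₂), t₁(y₁,y₂,x₁,x₂) = r₁(x₁,x₂,y₁,y₂), t₂(y₁,y₂,x₁,x₂) = r₂(x₁,x₂,y₁,y₂). (These identities express that the birational self-map ([x₁:x₂],[y₁:y₂]) ↦ ([r₁:r₂],[t₁:t₂]) of ℙ¹×ℙ¹ normalizes the group G ≅ C₂×Dₙ generated by t : (x,y) ↦ (ζₙx,ζₙy), σ : (x,y) ↦ (1/x,1/y) and s : (x,y) ↦ (y,x), inducing on G the outer automorphism t ↦ t, s ↦ s, σ ↦ σ·s, which does not come from any biregular automorphism normalizing G.) -/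
noncomputable section

open MvPolynomial

/-- The polynomial ring ℂ[x₁,x₂,y₁,y₂], with x₁ = X 0, x₂ = X 1, y₁ = X 2, y₂ = X 3. -/
abbrev RP : Type := MvPolynomial (Fin 4) ℂ

/-- m = (n+1)/2. -/
def mm (n : ℕ) : ℕ := (n + 1) / 2

/-- r₁ = x₂^m · y₁ · y₂^{m−1} − x₁^m · y₁^m. -/
def r1 (n : ℕ) : RP := X 1 ^ mm n * X 2 * X 3 ^ (mm n - 1) - X 0 ^ mm n * X 2 ^ mm n

/-- r₂ = x₂^m · y₂^m − x₁^{m−1} · x₂ · y₁^m. -/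
def r2 (n : ℕ) : RP := X 1 ^ mm n * X 3 ^ mm n - X 0 ^ (mm n - 1) * X 1 * X 2 ^ mm n

/-- t₁ = x₁ · x₂^{m−1} · y₂^m − x₁^m · y₁^m. -/
def t1 (n : ℕ) : RP := X 0 * X 1 ^ (mm n - 1) * X 3 ^ mm n - X 0 ^ mm n * X 2 ^ mm n

/-- t₂ = x₂^m · y₂^m − x₁^m · y₁^{m−1} · y₂. -/
def t2 (n : ℕ) : RP := X 1 ^ mm n * X 3 ^ mm n - X 0 ^ mm n * X 2 ^ (mm n - 1) * X 3

/-- Substitution (x₁,x₂,y₁,y₂) ↦ (ζx₁,x₂,ζy₁,y₂). -/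
def scaleXY (ζ : ℂ) : RP →ₐ[ℂ] RP := aeval ![C ζ * X 0, X 1, C ζ * X 2, X 3]

/-- Substitution (x₁,x₂,y₁,y₂) ↦ (x₂,x₁,y₂,y₁). -/
def swapXY : RP →ₐ[ℂ] RP := aeval ![X 1, X 0, X 3, X 2]

/-- Substitution (x₁,x₂,y₁,y₂) ↦ (y₁,y₂,x₁,x₂). -/
def swapPairs : RP →ₐ[ℂ] RP := aeval ![X 2, X 3, X 0, X 1]

/-!
The substitution `scaleXY ζ` multiplies a monomial by `ζ ^ (deg_{x₁} + deg_{y₁})`. In `r₁` and `t₁`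
this weight is `1` or `2m = n + 1`, in `r₂` and `t₂` it is `0` or `2m - 1 = n`, so for `ζ ^ n = 1`
they are eigenvectors with eigenvalues `ζ` and `1`. The `tᵢ` are the images of the `rᵢ` under
`swapPairs`, which commutes with `scaleXY ζ`; since `swapXY` and `swapPairs` are involutions, half of
the swap identities follow from the other half.
-/

section

variable {n : ℕ} {ζ : ℂ}

theorem two_mul_mm_of_odd (hn : Odd n) : 2 * mm n = n + 1 := by
  obtain ⟨k, rfl⟩ := hn
  simp only [mm]
  omega

theorem C_pow_mul_C_pow {a b : ℕ} {c : ℂ} (h : ζ ^ a * ζ ^ b = c) :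
    (C ζ : RP) ^ a * C ζ ^ b = C c := by
  rw [← map_pow, ← map_pow, ← map_mul, h]

theorem swapXY_involutive : Function.Involutive swapXY := by
  suffices h : swapXY.comp swapXY = AlgHom.id ℂ RP from fun p => AlgHom.congr_fun h p
  ext i
  fin_cases i <;> simp [swapXY]

theorem swapPairs_involutive : Function.Involutive swapPairs := by
  suffices h : swapPairs.comp swapPairs = AlgHom.id ℂ RP from fun p => AlgHom.congr_fun h p
  ext i
  fin_cases i <;> simp [swapPairs]

theorem scaleXY_swapPairs (p : RP) : scaleXY ζ (swapPairs p) = swapPairs (scaleXY ζ p) := by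
  suffices h : (scaleXY ζ).comp swapPairs = swapPairs.comp (scaleXY ζ) from AlgHom.congr_fun h p
  ext i
  fin_cases i <;> simp [scaleXY, swapPairs]

theorem swapXY_r1 : swapXY (r1 n) = -t2 n := by
  simp only [swapXY, r1, t2, map_sub, map_mul, map_pow, aeval_X, Matrix.cons_val]
  ring

theorem swapXY_r2 : swapXY (r2 n) = -t1 n := by
  simp only [swapXY, r2, t1, map_sub, map_mul, map_pow, aeval_X, Matrix.cons_val]
  ring

theorem swapXY_t1 : swapXY (t1 n) = -r2 n := by
  rw [swapXY_involutive.eq_iff, map_neg, swapXY_r2, neg_neg]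

theorem swapXY_t2 : swapXY (t2 n) = -r1 n := by
  rw [swapXY_involutive.eq_iff, map_neg, swapXY_r1, neg_neg]

theorem swapPairs_r1 : swapPairs (r1 n) = t1 n := by
  simp only [swapPairs, r1, t1, map_sub, map_mul, map_pow, aeval_X, Matrix.cons_val]
  ring

theorem swapPairs_r2 : swapPairs (r2 n) = t2 n := by
  simp only [swapPairs, r2, t2, map_sub, map_mul, map_pow, aeval_X, Matrix.cons_val]
  ring

theorem swapPairs_t1 : swapPairs (t1 n) = r1 n := by
  rw [swapPairs_involutive.eq_iff, swapPairs_r1]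

theorem swapPairs_t2 : swapPairs (t2 n) = r2 n := by
  rw [swapPairs_involutive.eq_iff, swapPairs_r2]

theorem scaleXY_r1 (hζ : ζ ^ mm n * ζ ^ mm n = ζ) : scaleXY ζ (r1 n) = C ζ * r1 n := by
  simp only [scaleXY, r1, map_sub, map_mul, map_pow, aeval_X, Matrix.cons_val, mul_pow]
  linear_combination (-(X 0 ^ mm n * X 2 ^ mm n) : RP) * C_pow_mul_C_pow hζ

theorem scaleXY_r2 (hζ : ζ ^ (mm n - 1) * ζ ^ mm n = 1) : scaleXY ζ (r2 n) = r2 n := by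
  simp only [scaleXY, r2, map_sub, map_mul, map_pow, aeval_X, Matrix.cons_val, mul_pow]
  linear_combination (-(X 0 ^ (mm n - 1) * X 1 * X 2 ^ mm n) : RP) * (C_pow_mul_C_pow hζ).trans C_1

theorem scaleXY_t1 (hζ : ζ ^ mm n * ζ ^ mm n = ζ) : scaleXY ζ (t1 n) = C ζ * t1 n := by
  rw [← swapPairs_r1, scaleXY_swapPairs, scaleXY_r1 hζ, ← smul_eq_C_mul, map_smul, smul_eq_C_mul]

theorem scaleXY_t2 (hζ : ζ ^ (mm n - 1) * ζ ^ mm n = 1) : scaleXY ζ (t2 n) = t2 n := by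
  rw [← swapPairs_r2, scaleXY_swapPairs, scaleXY_r2 hζ]

end

theorem equivariance_of_quadric_involution_polynomials_general
    (n : ℕ) (hodd : Odd n) :
    (∀ ζ : ℂ, ζ ^ n = 1 →
      scaleXY ζ (r1 n) = C ζ * r1 n ∧
      scaleXY ζ (r2 n) = r2 n ∧
      scaleXY ζ (t1 n) = C ζ * t1 n ∧
      scaleXY ζ (t2 n) = t2 n) ∧
    swapXY (r1 n) = - t2 n ∧
    swapXY (r2 n) = - t1 n ∧
    swapXY (t1 n) = - r2 n ∧
    swapXY (t2 n) = - r1 n ∧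
    swapPairs (r1 n) = t1 n ∧
    swapPairs (r2 n) = t2 n ∧
    swapPairs (t1 n) = r1 n ∧
    swapPairs (t2 n) = r2 n := by
  refine ⟨fun ζ hζ => ?_, swapXY_r1, swapXY_r2, swapXY_t1, swapXY_t2,
    swapPairs_r1, swapPairs_r2, swapPairs_t1, swapPairs_t2⟩
  have h2m := two_mul_mm_of_odd hodd
  have h_odd_weight : ζ ^ mm n * ζ ^ mm n = ζ := by
    rw [← pow_add, ← two_mul, h2m, pow_succ, hζ, one_mul]
  have h_even_weight : ζ ^ (mm n - 1) * ζ ^ mm n = 1 := by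
    rw [← pow_add, show mm n - 1 + mm n = n by omega, hζ]
  exact ⟨scaleXY_r1 h_odd_weight, scaleXY_r2 h_even_weight,
    scaleXY_t1 h_odd_weight, scaleXY_t2 h_even_weight⟩

theorem equivariance_of_quadric_involution_polynomials
    (n : ℕ) (hodd : Odd n) (h3 : 3 ≤ n) :
    (∀ ζ : ℂ, ζ ^ n = 1 →
      scaleXY ζ (r1 n) = C ζ * r1 n ∧
      scaleXY ζ (r2 n) = r2 n ∧
      scaleXY ζ (t1 n) = C ζ * t1 n ∧
      scaleXY ζ (t2 n) = t2 n) ∧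
    swapXY (r1 n) = - t2 n ∧
    swapXY (r2 n) = - t1 n ∧
    swapXY (t1 n) = - r2 n ∧
    swapXY (t2 n) = - r1 n ∧
    swapPairs (r1 n) = t1 n ∧
    swapPairs (r2 n) = t2 n ∧
    swapPairs (t1 n) = r1 n ∧
    swapPairs (t2 n) = r2 n :=
  equivariance_of_quadric_involution_polynomials_general n hodd

end
end

section
/- Let G be the subgroup of P generated by (x,y) ↦ (−x,−y) and (x,y) ↦ (1/y,x), and let G' be the subgroup of P generated by (x,y) ↦ (1/x,1/y) and (x,y) ↦ (y,−x). Then G and G' are both isomorphic to C₂ × C₄, and there exists h ∈ P with h·G·h⁻¹ = G'. -/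
noncomputable section

/-- GL₂(ℂ). -/
abbrev GL2 : Type := Matrix.GeneralLinearGroup (Fin 2) ℂ

/-- PGL₂(ℂ) = GL₂(ℂ) modulo its center. -/
abbrev PGL2 : Type := GL2 ⧸ Subgroup.center GL2

/-- The class in PGL₂(ℂ) of a 2×2 matrix of nonzero determinant, acting as the
corresponding Möbius transformation x ↦ (ax+b)/(cx+d). -/
def pg (A : Matrix (Fin 2) (Fin 2) ℂ) (h : A.det ≠ 0) : PGL2 :=
  QuotientGroup.mk (Matrix.GeneralLinearGroup.mkOfDetNeZero A h)

/-- PGL₂(ℂ) × PGL₂(ℂ). -/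
abbrev Gp : Type := PGL2 × PGL2

/-- The swap automorphism of PGL₂(ℂ) × PGL₂(ℂ). -/
def swapAut : MulAut Gp := MulEquiv.prodComm

lemma swapAut_sq : swapAut * swapAut = 1 := by
  ext p
  · simp [swapAut, MulAut.mul_apply, MulAut.one_apply]
  · simp [swapAut, MulAut.mul_apply, MulAut.one_apply]

/-- The action of C₂ (realized as ℤˣ) on PGL₂(ℂ) × PGL₂(ℂ) whose generator swaps
the two factors. -/
def phiP : ℤˣ →* MulAut Gp where
  toFun u := if u = 1 then 1 else swapAut
  map_one' := if_pos rfl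
  map_mul' := by
    intro a b
    have h1 : (-1 : ℤˣ) ≠ 1 := by decide
    rcases Int.units_eq_one_or a with ha | ha <;> rcases Int.units_eq_one_or b with hb | hb <;>
      subst ha <;> subst hb <;>
      simp [h1, swapAut_sq]

/-- P = (PGL₂(ℂ) × PGL₂(ℂ)) ⋊ C₂, the automorphism group of ℙ¹×ℙ¹: an element
⟨(g₁,g₂), ε⟩ acts on (x,y) by first swapping the coordinates if ε = −1 and then applying
the Möbius transformations g₁, g₂ on the two factors. -/
abbrev P : Type := SemidirectProduct Gp ℤˣ phiP

/-- The coordinate swap (x,y) ↦ (y,x). -/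
def σP : P := SemidirectProduct.inr (-1 : ℤˣ)

/-- The element of P acting coordinatewise by a pair of Möbius transformations. -/
def pl (g : Gp) : P := SemidirectProduct.inl g

/-- The Möbius transformation x ↦ −x. -/
def mNeg : PGL2 := pg !![(-1 : ℂ), 0; 0, 1] (by norm_num [Matrix.det_fin_two_of])

/-- The Möbius transformation x ↦ 1/x. -/
def mInv : PGL2 := pg !![(0 : ℂ), 1; 1, 0] (by norm_num [Matrix.det_fin_two_of])

/-- The Möbius transformation x ↦ ζ₄·x, for the primitive 4th root of unity ζ₄ = i. -/
def mI : PGL2 := pg !![Complex.I, 0; 0, 1]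
  (by simp [Matrix.det_fin_two_of, Complex.I_ne_zero])

/-- The Möbius transformation x ↦ (x−1)/(x+1). -/
def mU : PGL2 := pg !![(1 : ℂ), -1; 1, 1] (by norm_num [Matrix.det_fin_two_of])

/-- G = ⟨(x,y) ↦ (−x,−y), (x,y) ↦ (1/y, x)⟩. -/
def G12 : Subgroup P := Subgroup.closure {pl (mNeg, mNeg), pl (mInv, 1) * σP}

/-- G' = ⟨(x,y) ↦ (1/x,1/y), (x,y) ↦ (y, −x)⟩. -/
def G12' : Subgroup P := Subgroup.closure {pl (mInv, mInv), pl (1, mNeg) * σP}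

/-!
The Möbius map `u(x) = (x - 1)/(x + 1)` conjugates `x ↦ -x` to `x ↦ 1/x` and `x ↦ 1/x` to
`x ↦ -x`, and these two involutions commute. Hence `h = (u, -u)` conjugates the generators
`(-x, -y)` and `(1/y, x)` of `G` to the generators `(1/x, 1/y)` and `(y, -x)` of `G'`.

In `G`, the involution `a = (-x, -y)` commutes with `b = (1/y, x)`, and `b² = (1/x, 1/y) ≠ 1`,
so `b` has order 4. Odd powers of `b` swap the factors and `a ≠ b²`, so `a ∉ ⟨b⟩`, and
`(i, j) ↦ aⁱ bʲ` is an isomorphism `C₂ × C₄ ≅ G`; then `G' = hGh⁻¹ ≅ G`.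
-/

section PGL2

variable {A B : Matrix (Fin 2) (Fin 2) ℂ} {hA : A.det ≠ 0} {hB : B.det ≠ 0}

lemma pg_mul : pg A hA * pg B hB = pg (A * B) (by simp [Matrix.det_mul, hA, hB]) :=
  (QuotientGroup.mk_mul _ _ _).symm.trans (congrArg _ (Units.ext rfl))

lemma pg_eq_one_iff : pg A hA = 1 ↔ A ∈ Set.range (Matrix.scalar (Fin 2)) := by
  rw [pg, QuotientGroup.eq_one_iff, Matrix.GeneralLinearGroup.mem_center_iff_val_mem_range_scalar]
  rfl

lemma pg_eq_pg_of_eq_smul (c : ℂ) (h : B = c • A) : pg A hA = pg B hB := by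
  rw [pg, pg, QuotientGroup.eq, Matrix.GeneralLinearGroup.mem_center_iff_val_mem_range_scalar]
  refine ⟨c, ?_⟩
  simp [h, Matrix.nonsing_inv_mul _ (isUnit_iff_ne_zero.2 hA), Matrix.smul_one_eq_diagonal]

end PGL2

lemma mNeg_sq : mNeg ^ 2 = 1 := by
  rw [sq, mNeg, pg_mul, pg_eq_one_iff]
  exact ⟨1, by ext i j; fin_cases i <;> fin_cases j <;> simp⟩

lemma mInv_sq : mInv ^ 2 = 1 := by
  rw [sq, mInv, pg_mul, pg_eq_one_iff]
  exact ⟨1, by ext i j; fin_cases i <;> fin_cases j <;> simp⟩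

lemma commute_mNeg_mInv : Commute mNeg mInv := by
  rw [Commute, SemiconjBy, mNeg, mInv, pg_mul, pg_mul]
  exact pg_eq_pg_of_eq_smul (-1) (by ext i j; fin_cases i <;> fin_cases j <;> simp)

lemma mU_mul_mNeg : mU * mNeg = mInv * mU := by
  rw [mU, mNeg, mInv, pg_mul, pg_mul]
  exact pg_eq_pg_of_eq_smul (-1) (by ext i j; fin_cases i <;> fin_cases j <;> simp)

lemma mU_mul_mInv : mU * mInv = mNeg * mU := by
  rw [mU, mNeg, mInv, pg_mul, pg_mul]
  exact pg_eq_pg_of_eq_smul 1 (by ext i j; fin_cases i <;> fin_cases j <;> simp)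

lemma mNeg_ne_one : mNeg ≠ 1 := by
  rw [mNeg, Ne, pg_eq_one_iff]
  rintro ⟨c, hc⟩
  have := (congrFun₂ hc 0 0).symm.trans (congrFun₂ hc 1 1)
  norm_num at this

lemma mInv_ne_one : mInv ≠ 1 := by
  rw [mInv, Ne, pg_eq_one_iff]
  rintro ⟨c, hc⟩
  simpa using congrFun₂ hc 0 1

lemma mNeg_ne_mInv : mNeg ≠ mInv := by
  intro h
  have : mNeg * mInv = 1 := by rw [h, ← sq, mInv_sq]
  rw [mNeg, mInv, pg_mul, pg_eq_one_iff] at this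
  obtain ⟨c, hc⟩ := this
  simpa using congrFun₂ hc 0 1

lemma swapAut_apply (x y : PGL2) : swapAut (x, y) = (y, x) := rfl

lemma pl_mul (g h : Gp) : pl g * pl h = pl (g * h) := (map_mul SemidirectProduct.inl g h).symm

lemma pl_inv (g : Gp) : (pl g)⁻¹ = pl g⁻¹ := (map_inv SemidirectProduct.inl g).symm

lemma pl_eq_one_iff {g : Gp} : pl g = 1 ↔ g = 1 :=
  (map_eq_one_iff _ SemidirectProduct.inl_injective)

lemma rightHom_pl (g : Gp) : SemidirectProduct.rightHom (pl g) = 1 :=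
  SemidirectProduct.rightHom_inl g

lemma rightHom_σP : SemidirectProduct.rightHom σP = -1 :=
  SemidirectProduct.rightHom_inr _

lemma phiP_neg_one : phiP (-1) = swapAut := by
  simp [phiP]

lemma σP_mul_pl (g : Gp) : σP * pl g = pl (swapAut g) * σP := by
  apply SemidirectProduct.ext
  · rw [SemidirectProduct.mul_left, SemidirectProduct.mul_left]
    simp [σP, pl, phiP_neg_one]
  · rw [SemidirectProduct.mul_right, SemidirectProduct.mul_right]
    simp [σP, pl]

lemma σP_mul_σP : σP * σP = 1 := by
  rw [σP, ← map_mul]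
  simp

lemma pl_mul_σP_sq (g : Gp) : (pl g * σP) ^ 2 = pl (g * swapAut g) := by
  rw [sq, mul_assoc, ← mul_assoc σP, σP_mul_pl, mul_assoc, σP_mul_σP, mul_one, pl_mul]

lemma conj_pl (g k : Gp) : MulAut.conj (pl g) (pl k) = pl (g * k * g⁻¹) := by
  rw [MulAut.conj_apply, pl_inv, pl_mul, pl_mul]

lemma conj_pl_mul_σP (g k : Gp) :
    MulAut.conj (pl g) (pl k * σP) = pl (g * k * swapAut g⁻¹) * σP := by
  rw [MulAut.conj_apply, pl_inv, mul_assoc, mul_assoc, σP_mul_pl, ← mul_assoc, ← mul_assoc, pl_mul,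
    pl_mul]

theorem nonempty_closure_pair_mulEquiv_zmod_two_four {Γ : Type*} [Group Γ] {a b : Γ}
    (ha : orderOf a = 2) (hb : orderOf b = 4) (hab : Commute a b) (hnot : a ∉ Subgroup.zpowers b) :
    Nonempty (Subgroup.closure {a, b} ≃* Multiplicative (ZMod 2 × ZMod 4)) := by
  let f : Multiplicative (ZMod 2 × ZMod 4) →* Γ :=
    { toFun := fun p => a ^ p.toAdd.1.val * b ^ p.toAdd.2.val
      map_one' := by simp
      map_mul' := fun p q => by
        simp only [toAdd_mul, Prod.fst_add, Prod.snd_add, ZMod.val_add]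
        rw [← pow_eq_pow_mod _ (ha ▸ pow_orderOf_eq_one a),
          ← pow_eq_pow_mod _ (hb ▸ pow_orderOf_eq_one b), pow_add, pow_add]
        exact ((hab.pow_pow _ _).symm.mul_mul_mul_comm _ _).symm }
  have hf : Function.Injective f := by
    refine (injective_iff_map_eq_one f).2 fun p hp => ?_
    have hi : p.toAdd.1.val = 0 := by
      by_contra hi
      have hi1 : p.toAdd.1.val = 1 := by have := ZMod.val_lt p.toAdd.1; omega
      refine hnot ?_
      have hp' : a * b ^ p.toAdd.2.val = 1 := by simpa [f, hi1] using hp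
      rw [eq_inv_of_mul_eq_one_left hp']
      exact inv_mem (pow_mem (Subgroup.mem_zpowers b) _)
    have hj : p.toAdd.2.val = 0 := by
      have hp' : b ^ p.toAdd.2.val = 1 := by simpa [f, hi] using hp
      have hdvd := orderOf_dvd_of_pow_eq_one hp'
      rw [hb] at hdvd
      exact Nat.eq_zero_of_dvd_of_lt hdvd (ZMod.val_lt _)
    rw [ZMod.val_eq_zero] at hi hj
    exact congrArg Multiplicative.ofAdd (Prod.ext hi hj)
  have hrange : f.range = Subgroup.closure {a, b} := by
    refine le_antisymm ?_ (Subgroup.closure_le _ |>.2 ?_)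
    · rintro _ ⟨p, rfl⟩
      exact mul_mem (pow_mem (Subgroup.subset_closure (by simp)) _)
        (pow_mem (Subgroup.subset_closure (by simp)) _)
    · refine Set.insert_subset_iff.2 ⟨⟨Multiplicative.ofAdd (1, 0), ?_⟩, ?_⟩
      · simp [f, ZMod.val_one_eq_one_mod]
      · rintro _ rfl
        exact ⟨Multiplicative.ofAdd (0, 1), by simp [f, ZMod.val_one_eq_one_mod]⟩
  exact ⟨((MonoidHom.ofInjective hf).trans (MulEquiv.subgroupCongr hrange)).symm⟩

theorem nonempty_closure_diag_swap_mulEquiv {s t : PGL2} (hs : s ^ 2 = 1) (ht : t ^ 2 = 1)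
    (hst : Commute s t) (hs1 : s ≠ 1) (ht1 : t ≠ 1) (hne : s ≠ t) :
    Nonempty (Subgroup.closure {pl (s, s), pl (t, 1) * σP} ≃*
      Multiplicative (ZMod 2 × ZMod 4)) := by
  have hb2 : (pl (t, 1) * σP) ^ 2 = pl (t, t) := by
    rw [pl_mul_σP_sq, swapAut_apply, Prod.mk_mul_mk, mul_one, one_mul]
  have ha : orderOf (pl (s, s)) = 2 := by
    refine orderOf_eq_prime ?_ (by simpa [pl_eq_one_iff] using hs1)
    rw [sq, pl_mul, pl_eq_one_iff, Prod.mk_mul_mk, ← sq, hs, Prod.mk_one_one]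
  have hb : orderOf (pl (t, 1) * σP) = 4 := by
    refine orderOf_eq_prime_pow (p := 2) (n := 1) (by simpa [hb2, pl_eq_one_iff] using ht1) ?_
    rw [show 2 ^ (1 + 1) = 2 * 2 from rfl, pow_mul, hb2, sq, pl_mul, pl_eq_one_iff,
      Prod.mk_mul_mk, ← sq, ht, Prod.mk_one_one]
  refine nonempty_closure_pair_mulEquiv_zmod_two_four ha hb ?_ ?_
  · rw [Commute, SemiconjBy, ← mul_assoc, mul_assoc _ σP, σP_mul_pl, ← mul_assoc, pl_mul, pl_mul,
      swapAut_apply, Prod.mk_mul_mk, Prod.mk_mul_mk, hst.eq, mul_one, one_mul]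
  · classical
    intro hmem
    have hfin : IsOfFinOrder (pl (t, 1) * σP) := orderOf_pos_iff.1 (by rw [hb]; norm_num)
    obtain ⟨k, hk, hbk⟩ := Finset.mem_image.1 (hfin.mem_zpowers_iff_mem_range_orderOf.1 hmem)
    rw [hb, Finset.mem_range] at hk
    -- odd powers swap the two factors, `pl (s, s)` does not
    have hright := congrArg SemidirectProduct.rightHom hbk
    rw [map_pow, map_mul, rightHom_pl, rightHom_pl, rightHom_σP, one_mul] at hright
    interval_cases k
    · rw [pow_zero, eq_comm, pl_eq_one_iff] at hbk
      exact hs1 (Prod.ext_iff.1 hbk).1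
    · exact absurd hright (by decide)
    · rw [hb2] at hbk
      exact hne (Prod.ext_iff.1 (SemidirectProduct.inl_injective hbk)).1.symm
    · exact absurd hright (by decide)

theorem map_conj_G12_eq_G12' :
    Subgroup.map (MulAut.conj (pl (mU, mNeg * mU))).toMonoidHom G12 = G12' := by
  have hUN : mU * mNeg * mU⁻¹ = mInv := mul_inv_eq_of_eq_mul mU_mul_mNeg
  have hUV : mU * mInv * mU⁻¹ = mNeg := mul_inv_eq_of_eq_mul mU_mul_mInv
  have h₁ : MulAut.conj (pl (mU, mNeg * mU)) (pl (mNeg, mNeg)) = pl (mInv, mInv) := by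
    rw [conj_pl, Prod.mk_mul_mk, Prod.inv_mk, Prod.mk_mul_mk, hUN]
    congr 2
    calc mNeg * mU * mNeg * (mNeg * mU)⁻¹ = mNeg * (mU * mNeg * mU⁻¹) * mNeg⁻¹ := by group
      _ = mInv := by rw [hUN, commute_mNeg_mInv.eq, mul_inv_cancel_right]
  have h₂ : MulAut.conj (pl (mU, mNeg * mU)) (pl (mInv, 1) * σP) = pl (1, mNeg) * σP := by
    rw [conj_pl_mul_σP, Prod.inv_mk, swapAut_apply, Prod.mk_mul_mk, Prod.mk_mul_mk]
    congr 3
    · calc mU * mInv * (mNeg * mU)⁻¹ = mU * mInv * mU⁻¹ * mNeg⁻¹ := by group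
        _ = 1 := by rw [hUV, mul_inv_cancel]
    · group
  rw [G12, G12', MonoidHom.map_closure, Set.image_pair, MulEquiv.coe_toMonoidHom, h₁, h₂]

theorem C2xC4_actions_conjugate :
    Nonempty (G12 ≃* Multiplicative (ZMod 2 × ZMod 4)) ∧
    Nonempty (G12' ≃* Multiplicative (ZMod 2 × ZMod 4)) ∧
    ∃ h : P, Subgroup.map (MulAut.conj h).toMonoidHom G12 = G12' := by
  obtain ⟨e⟩ : Nonempty (G12 ≃* Multiplicative (ZMod 2 × ZMod 4)) :=
    nonempty_closure_diag_swap_mulEquiv mNeg_sq mInv_sq commute_mNeg_mInv mNeg_ne_one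
      mInv_ne_one mNeg_ne_mInv
  refine ⟨⟨e⟩, ⟨?_⟩, _, map_conj_G12_eq_G12'⟩
  exact (MulEquiv.subgroupCongr map_conj_G12_eq_G12').symm.trans
    ((MulEquiv.subgroupMap (MulAut.conj (pl (mU, mNeg * mU))) G12).symm.trans e)

end
end

section
/- Let G be the subgroup of N generated by g₁ : (x,y) ↦ (−x,−y), g₂ : (x,y) ↦ (y,−x) and g₃ : (x,y) ↦ (y⁻¹,x) (a group of order 16 isomorphic to C₂²⋊C₄). Then, for i = √−1, the G-orbit of the point (i,i) ∈ ℂˣ×ℂˣ is exactly the four-element set {(i,i), (i,−i), (−i,i), (−i,−i)}, and the image of G in the group of permutations of this orbit is cyclic of order 4. -/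
/-!
The group G preserves the set of points of ℂˣ × ℂˣ whose coordinates both square to −1, since
negation, inversion and the swap all preserve the equation x² = −1; and g₂, g₃, g₁ carry (i,i) to
the other three such points, so this set is the orbit. On it g₁ acts as g₂², and g₃ acts as g₂⁻¹
because x⁻¹ = −x whenever x² = −1. Hence the image of G is generated by the image of g₂, which
has order 4 because g₂⁴ = 1 while g₂² sends (i,i) to (−i,−i).
-/

noncomputable section

/-- The torus ℂˣ × ℂˣ. -/
abbrev Pt : Type := ℂˣ × ℂˣ

/-- The scaling τ_{a,b} : (x,y) ↦ (ax, by), an element of the group N of bijections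
of ℂˣ × ℂˣ. -/
def tauP (a b : ℂˣ) : Equiv.Perm Pt := (Equiv.mulLeft a).prodCongr (Equiv.mulLeft b)

/-- The inversion ι₁ : (x,y) ↦ (x⁻¹, y). -/
def inv1P : Equiv.Perm Pt := (Equiv.inv ℂˣ).prodCongr (Equiv.refl ℂˣ)

/-- The swap s : (x,y) ↦ (y, x). -/
def swP : Equiv.Perm Pt := Equiv.prodComm ℂˣ ℂˣ

/-- g₁ : (x,y) ↦ (−x,−y). -/
def g1 : Equiv.Perm Pt := tauP (-1) (-1)

/-- g₂ : (x,y) ↦ (y,−x). -/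
def g2 : Equiv.Perm Pt := tauP 1 (-1) * swP

/-- g₃ : (x,y) ↦ (y⁻¹,x). -/
def g3 : Equiv.Perm Pt := inv1P * swP

/-- G = ⟨g₁, g₂, g₃⟩ ≅ C₂²⋊C₄, a subgroup of N of order 16. -/
def G15 : Subgroup (Equiv.Perm Pt) := Subgroup.closure {g1, g2, g3}

/-- i = √−1 as a unit of ℂ. -/
def uI : ℂˣ := Units.mk0 Complex.I Complex.I_ne_zero

def sqrtNegOnePairs : Set Pt := {p | p.1 ^ 2 = -1 ∧ p.2 ^ 2 = -1}

lemma inv_eq_neg_of_sq_eq_neg_one {G : Type*} [Group G] [HasDistribNeg G] {x : G}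
    (hx : x ^ 2 = -1) : x⁻¹ = -x :=
  inv_eq_of_mul_eq_one_right (by rw [mul_neg, ← sq, hx, neg_neg])

lemma sq_eq_neg_one_iff_eq_uI_or_eq_neg_uI (x : ℂˣ) : x ^ 2 = -1 ↔ x = uI ∨ x = -uI := by
  have hI : ((uI : ℂˣ) : ℂ) = Complex.I := rfl
  simp only [Units.ext_iff, Units.val_pow_eq_pow_val, Units.val_neg, Units.val_one, hI]
  rw [← Complex.I_sq, sq_eq_sq_iff_eq_or_eq_neg]

lemma sqrtNegOnePairs_eq :
    sqrtNegOnePairs = {((uI, uI) : Pt), (uI, -uI), (-uI, uI), (-uI, -uI)} := by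
  ext ⟨x, y⟩
  simp only [sqrtNegOnePairs, Set.mem_ofPred_eq, sq_eq_neg_one_iff_eq_uI_or_eq_neg_uI,
    Set.mem_insert_iff, Set.mem_singleton_iff, Prod.mk.injEq]
  tauto

lemma uI_ne_neg_uI : uI ≠ -uI := by
  simp [Units.ext_iff, uI, CharZero.eq_neg_self_iff]

lemma g1_apply (x y : ℂˣ) : g1 (x, y) = (-x, -y) := by simp [g1, tauP]
lemma g2_apply (x y : ℂˣ) : g2 (x, y) = (y, -x) := by simp [g2, tauP, swP]
lemma g3_apply (x y : ℂˣ) : g3 (x, y) = (y⁻¹, x) := by simp [g3, inv1P, swP]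

lemma g2_sq : g2 ^ 2 = g1 := by
  ext ⟨x, y⟩ <;> simp [sq, g1_apply, g2_apply]

lemma g2_pow_four : g2 ^ 4 = 1 := by
  rw [show 4 = 2 * 2 from rfl, pow_mul, g2_sq]
  ext ⟨x, y⟩ <;> simp [sq, g1_apply]

lemma g3_mul_g2_apply {p : Pt} (hp : p ∈ sqrtNegOnePairs) : (g3 * g2) p = p := by
  obtain ⟨x, y⟩ := p
  simp [g2_apply, g3_apply, inv_eq_neg_of_sq_eq_neg_one hp.1]

lemma g1_mem : g1 ∈ G15 := Subgroup.subset_closure (by simp)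
lemma g2_mem : g2 ∈ G15 := Subgroup.subset_closure (by simp)
lemma g3_mem : g3 ∈ G15 := Subgroup.subset_closure (by simp)

open scoped Pointwise in
lemma G15_le_stabilizer_sqrtNegOnePairs :
    G15 ≤ MulAction.stabilizer (Equiv.Perm Pt) sqrtNegOnePairs := by
  have hinv : ∀ a : ℂˣ, a⁻¹ = -1 ↔ a = -1 := fun a => by
    rw [inv_eq_iff_eq_inv, inv_neg, inv_one]
  rw [G15, Subgroup.closure_le]
  rintro g (rfl | rfl | rfl) <;> refine MulAction.mem_stabilizer_set.2 fun ⟨x, y⟩ => ?_ <;>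
    simp [Equiv.Perm.smul_def, sqrtNegOnePairs, g1_apply, g2_apply, g3_apply, hinv, and_comm]

lemma orbit_uI_uI : MulAction.orbit G15 ((uI, uI) : Pt) = sqrtNegOnePairs := by
  have huI : uI ^ 2 = -1 := (sq_eq_neg_one_iff_eq_uI_or_eq_neg_uI uI).2 (.inl rfl)
  apply subset_antisymm
  · rintro _ ⟨g, rfl⟩
    exact (MulAction.mem_stabilizer_set.1 (G15_le_stabilizer_sqrtNegOnePairs g.2) _).2 ⟨huI, huI⟩
  · rw [sqrtNegOnePairs_eq]
    rintro p (rfl | rfl | rfl | rfl)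
    · exact MulAction.mem_orbit_self _
    · exact ⟨⟨g2, g2_mem⟩, by simp [Subgroup.smul_def, Equiv.Perm.smul_def, g2_apply]⟩
    · exact ⟨⟨g3, g3_mem⟩, by
        simp [Subgroup.smul_def, Equiv.Perm.smul_def, g3_apply,
          inv_eq_neg_of_sq_eq_neg_one huI]⟩
    · exact ⟨⟨g1, g1_mem⟩, by simp [Subgroup.smul_def, Equiv.Perm.smul_def, g1_apply]⟩

def orbitPermHom : G15 →* Equiv.Perm (MulAction.orbit G15 ((uI, uI) : Pt)) :=
  MulAction.toPermHom G15 _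

lemma orbitPermHom_apply (g : G15) (x : MulAction.orbit G15 ((uI, uI) : Pt)) :
    (orbitPermHom g x : Pt) = g • (x : Pt) :=
  rfl

lemma orbitPermHom_g1 : orbitPermHom ⟨g1, g1_mem⟩ = orbitPermHom ⟨g2, g2_mem⟩ ^ 2 := by
  rw [← map_pow]
  exact congrArg orbitPermHom (Subtype.ext g2_sq.symm)

lemma orbitPermHom_g3 : orbitPermHom ⟨g3, g3_mem⟩ = (orbitPermHom ⟨g2, g2_mem⟩)⁻¹ := by
  refine eq_inv_of_mul_eq_one_left (Equiv.ext fun x => Subtype.ext ?_)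
  rw [← map_mul]
  exact g3_mul_g2_apply (orbit_uI_uI ▸ x.2)

lemma range_orbitPermHom :
    orbitPermHom.range = Subgroup.zpowers (orbitPermHom ⟨g2, g2_mem⟩) := by
  refine le_antisymm ?_ (Subgroup.zpowers_le.2 ⟨_, rfl⟩)
  have htop : Subgroup.closure (G15.subtype ⁻¹' {g1, g2, g3}) = ⊤ :=
    Subgroup.closure_preimage_eq_top _
  rw [MonoidHom.range_eq_map, ← htop, MonoidHom.map_closure, Subgroup.closure_le]
  rintro _ ⟨⟨g, _⟩, hgs, rfl⟩
  rcases hgs with rfl | rfl | rfl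
  · rw [orbitPermHom_g1]
    exact Subgroup.pow_mem _ (Subgroup.mem_zpowers _) 2
  · exact Subgroup.mem_zpowers _
  · rw [orbitPermHom_g3]
    exact Subgroup.inv_mem _ (Subgroup.mem_zpowers _)

lemma orderOf_orbitPermHom_g2 : orderOf (orbitPermHom ⟨g2, g2_mem⟩) = 4 := by
  have hsq : orbitPermHom ⟨g2, g2_mem⟩ ^ 2 ≠ 1 := by
    rw [← orbitPermHom_g1]
    intro h
    have hfst := congrArg (fun e => ((e ⟨(uI, uI), MulAction.mem_orbit_self _⟩ : Pt)).1) h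
    exact uI_ne_neg_uI (by simpa [orbitPermHom_apply, Subgroup.smul_def, Equiv.Perm.smul_def,
      g1_apply] using hfst.symm)
  have hpow : orbitPermHom ⟨g2, g2_mem⟩ ^ 4 = 1 := by
    rw [← map_pow, ← map_one orbitPermHom]
    exact congrArg orbitPermHom (Subtype.ext g2_pow_four)
  exact orderOf_eq_prime_pow (p := 2) (n := 1) hsq hpow

theorem orbit_of_ii_and_cyclic_image :
    MulAction.orbit G15 ((uI, uI) : Pt) =
      {((uI, uI) : Pt), (uI, -uI), (-uI, uI), (-uI, -uI)} ∧
    ∃ ψ : G15 →* Equiv.Perm (MulAction.orbit G15 ((uI, uI) : Pt)),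
      (∀ (g : G15) (x : MulAction.orbit G15 ((uI, uI) : Pt)),
        (ψ g x : Pt) = g • (x : Pt)) ∧
      IsCyclic ψ.range ∧ Nat.card ψ.range = 4 := by
  refine ⟨orbit_uI_uI.trans sqrtNegOnePairs_eq, orbitPermHom, orbitPermHom_apply, ?_, ?_⟩
  · rw [range_orbitPermHom]
    infer_instance
  · rw [range_orbitPermHom, Nat.card_zpowers, orderOf_orbitPermHom_g2]

end
end
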